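/- For every bundle scenario f: Γ → Σ, the map ζ_f sending an empirical model p on f to the simplicial distribution Np on Nf is a bijection from the set bEmp(f) of empirical models on f onto the set sDist(Nf) of simplicial distributions on Nf: NΓ → NΣ. -/

import Mathlib

universe u v w t

namespace Ctx

/-- An abstract simplicial complex on the vertex type `V`: a collection of
nonempty finite subsets of `V` (the simplices/faces), closed under passing to
nonempty subsets, and containing every singleton (so that `V` is exactly the
vertex set). -/
structure SComplex (V : Type u) where
  faces : Set (Set V)
  finite_mem : ∀ σ ∈ faces, Set.Finite σ
  nonempty_mem : ∀ σ ∈ faces, Set.Nonempty σ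
  down_closed : ∀ ⦃σ⦄, σ ∈ faces → ∀ ⦃τ⦄, τ ⊆ σ → τ.Nonempty → τ ∈ faces
  singleton_mem : ∀ x : V, {x} ∈ faces

namespace SComplex

variable {V : Type u} {W : Type v} {V' : Type w} {V'' : Type t}

/-- A map of simplicial complexes: a function on vertices carrying every
simplex (elementwise image) to a simplex. -/
@[ext]
structure Map (Γ : SComplex V) (K : SComplex W) where
  toFun : V → W
  map_faces : ∀ ⦃σ⦄, σ ∈ Γ.faces → toFun '' σ ∈ K.faces

variable {Γ : SComplex V} {K : SComplex W} {K' : SComplex V'}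

/-- The identity simplicial complex map. -/
protected def Map.id (K : SComplex V) : Map K K :=
  ⟨fun x => x, fun σ h => by simpa using h⟩

/-- Composition of simplicial complex maps. -/
def Map.comp {L : SComplex V'} (g : Map K L) (f : Map Γ K) : Map Γ L :=
  ⟨g.toFun ∘ f.toFun, fun σ h => by
    rw [Set.image_comp]; exact g.map_faces (f.map_faces h)⟩

/-- The star of a simplex: all simplices containing it. -/
def star (K : SComplex V) (σ : Set V) : Set (Set V) := {τ | τ ∈ K.faces ∧ σ ⊆ τ}

/-- Surjectivity: every simplex of the target is an image of a simplex. -/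
def Map.Surj (f : Map Γ K) : Prop := ∀ σ ∈ K.faces, ∃ γ ∈ Γ.faces, f.toFun '' γ = σ

/-- Local surjectivity: stars surject onto stars. -/
def Map.LocSurj (f : Map Γ K) : Prop :=
  ∀ γ ∈ Γ.faces, ∀ τ ∈ K.star (f.toFun '' γ), ∃ γ' ∈ Γ.star γ, f.toFun '' γ' = τ

/-- Discreteness over vertices: no edge between distinct vertices with the
same image. -/
def Map.DiscV (f : Map Γ K) : Prop :=
  ∀ x y : V, x ≠ y → f.toFun x = f.toFun y → ({x, y} : Set V) ∉ Γ.faces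

/-- A bundle scenario: a surjective, locally surjective simplicial complex map
that is discrete over vertices. -/
def Map.IsBundle (f : Map Γ K) : Prop := f.Surj ∧ f.LocSurj ∧ f.DiscV

/-- `f` has the right lifting property with respect to `g`. -/
def RLP {A : Type*} {B : Type*} {CA : SComplex A} {CB : SComplex B}
    (g : Map CA CB) (f : Map Γ K) : Prop :=
  ∀ (u : Map CA Γ) (v : Map CB K), f.comp u = v.comp g →
    ∃ h : Map CB Γ, h.comp g = u ∧ f.comp h = v

/-- The full simplicial complex `Δ^n` on `{0, …, n}`. -/
def deltaC (n : ℕ) : SComplex (Fin (n + 1)) where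
  faces := {σ | σ.Nonempty}
  finite_mem := fun σ _ => σ.toFinite
  nonempty_mem := fun _ h => h
  down_closed := fun _ _ _ _ h => h
  singleton_mem := fun x => Set.singleton_nonempty x

/-- The simplicial complex map `Δ^m → Δ^n` induced by a function
`{0,…,m} → {0,…,n}`. -/
def deltaMap {m n : ℕ} (θ : Fin (m + 1) → Fin (n + 1)) : Map (deltaC m) (deltaC n) :=
  ⟨θ, fun _ h => h.image θ⟩

/-- The empty simplicial complex. -/
def emptyC : SComplex Empty where
  faces := ∅
  finite_mem := fun _ h => h.elim
  nonempty_mem := fun _ h => h.elim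
  down_closed := fun _ h => h.elim
  singleton_mem := fun x => x.elim

/-- The inclusion of the empty simplicial complex into `Δ^n`. -/
def emptyToDelta (n : ℕ) : Map emptyC (deltaC n) :=
  ⟨fun x => x.elim, fun _ h => h.elim⟩

/-- The type of faces of a simplicial complex. -/
abbrev Face (K : SComplex V) : Type u := {σ : Set V // σ ∈ K.faces}

/-- The nerve complex `ĤN K`: vertices are the simplices of `K`, and a
nonempty finite set of simplices is a face iff its union is a face of `K`. -/
def nerveC (K : SComplex V) : SComplex K.Face where
  faces := {τ | τ.Finite ∧ τ.Nonempty ∧ (⋃ σ ∈ τ, (σ : Set V)) ∈ K.faces}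
  finite_mem := fun _ h => h.1
  nonempty_mem := fun _ h => h.2.1
  down_closed := by
    intro τ h τ' hsub hne
    refine ⟨h.1.subset hsub, hne, K.down_closed h.2.2 ?_ ?_⟩
    · exact Set.biUnion_subset_biUnion_left hsub
    · obtain ⟨σ, hσ⟩ := hne
      obtain ⟨x, hx⟩ := K.nonempty_mem σ.1 σ.2
      exact ⟨x, Set.mem_biUnion hσ hx⟩
  singleton_mem := fun σ => ⟨Set.finite_singleton σ, Set.singleton_nonempty σ, by
    simpa using σ.2⟩

/-- The map `ĤN f` induced on nerve complexes. -/
def nerveMap (f : Map Γ K) : Map (nerveC Γ) (nerveC K) where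
  toFun γ := ⟨f.toFun '' γ.1, f.map_faces γ.2⟩
  map_faces := by
    intro τ hτ
    refine ⟨hτ.1.image _, hτ.2.1.image _, ?_⟩
    have h : (⋃ σ ∈ (fun γ : Γ.Face => (⟨f.toFun '' γ.1, f.map_faces γ.2⟩ : K.Face)) '' τ,
        (σ : Set W)) = f.toFun '' (⋃ σ ∈ τ, (σ : Set V)) := by
      rw [Set.biUnion_image, Set.image_iUnion₂]
    exact Set.mem_of_eq_of_mem h (f.map_faces hτ.2.2)

/-- The unit `δ : K → ĤN K`, sending a vertex to the singleton simplex. -/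
def deltaHat (K : SComplex V) : Map K (nerveC K) where
  toFun x := ⟨{x}, K.singleton_mem x⟩
  map_faces := by
    intro σ hσ
    refine ⟨(K.finite_mem σ hσ).image _, (K.nonempty_mem σ hσ).image _, ?_⟩
    have h : (⋃ τ ∈ (fun x : V => (⟨{x}, K.singleton_mem x⟩ : K.Face)) '' σ,
        (τ : Set V)) = σ := by
      rw [Set.biUnion_image]
      exact Set.biUnion_of_singleton σ
    exact Set.mem_of_eq_of_mem h hσ

/-- The multiplication `μ : ĤN (ĤN K) → ĤN K` of the nerve complex monad,
sending a set of simplices to its union. -/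
def muMap (K : SComplex V) : Map (nerveC (nerveC K)) (nerveC K) where
  toFun τ := ⟨⋃ σ ∈ τ.1, (σ : Set V), τ.2.2.2⟩
  map_faces := by
    intro T hT
    refine ⟨hT.1.image _, hT.2.1.image _, ?_⟩
    have h : (⋃ σ ∈ (fun τ : (nerveC K).Face =>
          (⟨⋃ σ ∈ τ.1, (σ : Set V), τ.2.2.2⟩ : K.Face)) '' T, (σ : Set V))
        = ⋃ σ ∈ (⋃ τ ∈ T, (τ : Set K.Face)), (σ : Set V) := by
      rw [Set.biUnion_image]
      ext x
      simp only [Set.mem_iUnion, Set.mem_setOf_eq]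
      tauto
    exact Set.mem_of_eq_of_mem h hT.2.2.2.2

/-- The vertex type of the pull-back of `f : Γ → K` along `π : K' → K`. -/
def PB {Γ : SComplex V} {K : SComplex W} {K' : SComplex V'} (f : Map Γ K) (π : Map K' K) :
    Type (max u w) :=
  {q : V × V' // f.toFun q.1 = π.toFun q.2}

/-- The pull-back of `f : Γ → K` along `π : K' → K`: vertices are pairs
`(x, y)` with `f x = π y`, and a set of pairs is a simplex iff both coordinate
projections are simplices. -/
def pullback {Γ : SComplex V} {K : SComplex W} {K' : SComplex V'} (f : Map Γ K) (π : Map K' K) :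
    SComplex (PB f π) where
  faces := {τ | ((fun q : PB f π => q.1.1) '' τ) ∈ Γ.faces ∧
    ((fun q : PB f π => q.1.2) '' τ) ∈ K'.faces}
  finite_mem := by
    intro τ h
    have h1 : (Subtype.val '' τ).Finite := by
      refine Set.Finite.subset (Set.Finite.prod (Γ.finite_mem _ h.1) (K'.finite_mem _ h.2)) ?_
      rintro q ⟨r, hr, rfl⟩
      exact ⟨⟨r, hr, rfl⟩, ⟨r, hr, rfl⟩⟩
    exact Set.Finite.of_finite_image h1 Subtype.val_injective.injOn
  nonempty_mem := fun τ h => Set.Nonempty.of_image (Γ.nonempty_mem _ h.1)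
  down_closed := fun τ h τ' hsub hne =>
    ⟨Γ.down_closed h.1 (Set.image_mono hsub) (hne.image _),
     K'.down_closed h.2 (Set.image_mono hsub) (hne.image _)⟩
  singleton_mem := fun q => by
    constructor
    · simpa using Γ.singleton_mem q.1.1
    · simpa using K'.singleton_mem q.1.2

/-- First projection of the pull-back. -/
def pbFst {Γ : SComplex V} {K : SComplex W} {K' : SComplex V'} (f : Map Γ K) (π : Map K' K) :
    Map (pullback f π) Γ :=
  ⟨fun q => q.1.1, fun _ h => h.1⟩

/-- Second projection of the pull-back (the pulled-back bundle). -/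
def pbSnd {Γ : SComplex V} {K : SComplex W} {K' : SComplex V'} (f : Map Γ K) (π : Map K' K) :
    Map (pullback f π) K' :=
  ⟨fun q => q.1.2, fun _ h => h.2⟩

/-- The event complex `E_O K` of a scenario `(K, O)`: vertices are pairs
`(x, o)` with `o ∈ O x`, and simplices are graphs of outcome assignments over
simplices of `K`. -/
def eventComplex (K : SComplex V) (O : V → Type v) : SComplex ((x : V) × O x) where
  faces := {τ | (Sigma.fst '' τ) ∈ K.faces ∧ Set.InjOn Sigma.fst τ}
  finite_mem := fun _ h => Set.Finite.of_finite_image (K.finite_mem _ h.1) h.2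
  nonempty_mem := fun _ h => Set.Nonempty.of_image (K.nonempty_mem _ h.1)
  down_closed := fun τ h τ' hsub hne =>
    ⟨K.down_closed h.1 (Set.image_mono hsub) (hne.image _), h.2.mono hsub⟩
  singleton_mem := fun p => ⟨by simpa using K.singleton_mem p.1, Set.injOn_singleton _ _⟩

/-- The canonical projection `E_O K → K` of a scenario. -/
def eventProj (K : SComplex V) (O : V → Type v) : Map (eventComplex K O) K :=
  ⟨Sigma.fst, fun _ h => h.1⟩

end SComplex

open SComplex

/-- `R`-distributions on a set `U`: finitely supported `R`-valued functions
summing to `1`. -/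
def Dist (R : Type u) [CommSemiring R] (U : Type v) : Type (max u v) :=
  {p : U →₀ R // p.sum (fun _ r => r) = 1}

/-- Push-forward of distributions along a function. -/
noncomputable def Dist.map {R : Type u} [CommSemiring R] {U : Type v} {U' : Type w} (g : U → U')
    (p : Dist R U) : Dist R U' :=
  ⟨Finsupp.mapDomain g p.1, by
    rw [Finsupp.sum_mapDomain_index (fun _ => rfl) (fun _ _ _ => rfl)]
    exact p.2⟩

/-- The Dirac distribution at a point. -/
noncomputable def Dist.pure {R : Type u} [CommSemiring R] {U : Type v} (u : U) : Dist R U :=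
  ⟨Finsupp.single u 1, by rw [Finsupp.sum_single_index rfl]⟩

namespace SComplex

/-- The fiber of a simplicial complex map over a simplex of the target. -/
abbrev Map.fiber {Γ : SComplex V} {K : SComplex W} (f : Map Γ K) (σ : Set W) : Type u :=
  {γ : Set V // γ ∈ Γ.faces ∧ f.toFun '' γ = σ}

/-- The restriction map between fibers, sending `γ` over `σ` to the
subsimplex of `γ` lying over `σ' ⊆ σ`.  (For bundle scenarios this is the
unique such subsimplex.) -/
def Map.resFiber {Γ : SComplex V} {K : SComplex W} (f : Map Γ K) {σ σ' : Set W}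
    (hσ' : σ' ∈ K.faces) (h : σ' ⊆ σ) (γ : f.fiber σ) : f.fiber σ' := by
  have hne : ({y | y ∈ γ.1 ∧ f.toFun y ∈ σ'} : Set V).Nonempty := by
    obtain ⟨x, hx⟩ := K.nonempty_mem σ' hσ'
    have hx' : x ∈ f.toFun '' γ.1 := (Set.ext_iff.mp γ.2.2 x).mpr (h hx)
    obtain ⟨y, hy, rfl⟩ := hx'
    exact ⟨y, hy, hx⟩
  refine ⟨{y | y ∈ γ.1 ∧ f.toFun y ∈ σ'},
    Γ.down_closed γ.2.1 (fun y hy => hy.1) hne, ?_⟩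
  ext x
  constructor
  · rintro ⟨y, ⟨hy, hfy⟩, rfl⟩
    exact hfy
  · intro hx
    have hx' : x ∈ f.toFun '' γ.1 := (Set.ext_iff.mp γ.2.2 x).mpr (h hx)
    obtain ⟨y, hy, rfl⟩ := hx'
    exact ⟨y, ⟨hy, hx⟩, rfl⟩

/-- An empirical model on a bundle scenario `f : Γ → K`: a compatible family
of distributions on the fibers of `f`. -/
structure EmpiricalModel (R : Type t) [CommSemiring R] {Γ : SComplex V} {K : SComplex W}
    (f : Map Γ K) where
  dist : ∀ σ, σ ∈ K.faces → Dist R (f.fiber σ)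
  compat : ∀ σ (hσ : σ ∈ K.faces) σ' (hσ' : σ' ∈ K.faces) (h : σ' ⊆ σ),
    Dist.map (f.resFiber hσ' h) (dist σ hσ) = dist σ' hσ'

/-- An empirical model on a scenario `(K, O)`: a compatible family of
distributions on joint outcome assignments over each measurement context. -/
structure ScenEmp (R : Type t) [CommSemiring R] (K : SComplex V) (O : V → Type v) where
  dist : ∀ σ, σ ∈ K.faces → Dist R (∀ x : σ, O x.1)
  compat : ∀ σ (hσ : σ ∈ K.faces) σ' (hσ' : σ' ∈ K.faces) (h : σ' ⊆ σ),
    Dist.map (fun (s : ∀ x : σ, O x.1) (x : σ') => s ⟨x.1, h x.2⟩) (dist σ hσ) = dist σ' hσ'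

end SComplex

namespace SComplex

variable {V : Type u} {W : Type v} {V' : Type w}


/-- The defining property of the push-forward `π_* p` of an empirical model
`p` on `f` along a simplicial relation `π : K' → ĤN K` (a simplicial complex
map into the nerve complex): over a simplex `σ'` of `K'`, the value at a fiber
element `γ'` of the pulled-back bundle is the value of `p` over the union
`π̄(σ')` at the union of the first components of `γ'`. -/
def piPushSpec {Γ : SComplex V} {K : SComplex W} {K' : SComplex V'}
    (f : Map Γ K) (π : Map K' (nerveC K)) {R : Type t} [CommSemiring R]
    (p : EmpiricalModel R f) (q : EmpiricalModel R (pbSnd (nerveMap f) π)) : Prop :=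
  ∀ σ' (hσ' : σ' ∈ K'.faces) (γ' : (pbSnd (nerveMap f) π).fiber σ')
    (hu : (⋃ x' ∈ σ', ((π.toFun x' : K.Face) : Set W)) ∈ K.faces)
    (γ : f.fiber (⋃ x' ∈ σ', ((π.toFun x' : K.Face) : Set W))),
    (γ : Set V) = (⋃ r ∈ γ'.1, ((r.1.1 : Γ.Face) : Set V)) →
    (q.dist σ' hσ').1 γ' = (p.dist _ hu).1 γ

/-- The fiber element of the event bundle given by the graph of an outcome
assignment `s` over a simplex `σ`. -/
def graphFiber (K : SComplex V) (O : V → Type v) {σ : Set V} (hσ : σ ∈ K.faces)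
    (s : ∀ x : σ, O x.1) : (eventProj K O).fiber σ := by
  refine ⟨{p : (x : V) × O x | ∃ h : p.1 ∈ σ, p.2 = s ⟨p.1, h⟩}, ⟨?_, ?_⟩, ?_⟩
  · have h : Sigma.fst '' {p : (x : V) × O x | ∃ h : p.1 ∈ σ, p.2 = s ⟨p.1, h⟩} = σ := by
      ext x
      constructor
      · rintro ⟨p, ⟨hp, _⟩, rfl⟩; exact hp
      · intro hx; exact ⟨⟨x, s ⟨x, hx⟩⟩, ⟨hx, rfl⟩, rfl⟩
    exact Set.mem_of_eq_of_mem h hσ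
  · rintro ⟨x₁, o₁⟩ ⟨h₁, ho₁⟩ ⟨x₂, o₂⟩ ⟨h₂, ho₂⟩ hx
    obtain rfl : x₁ = x₂ := hx
    exact congrArg (Sigma.mk x₁) (ho₁.trans ho₂.symm)
  · ext x
    constructor
    · rintro ⟨p, ⟨hp, _⟩, rfl⟩; exact hp
    · intro hx; exact ⟨⟨x, s ⟨x, hx⟩⟩, ⟨hx, rfl⟩, rfl⟩

/-- Push-forward of a fiber element along a map over the base. -/
def pushFiber {Γ : SComplex V} {Γ' : SComplex V'} {K : SComplex W}
    (f : Map Γ K) (g : Map Γ' K) (α : Map Γ Γ') (hc : g.comp α = f) (σ : Set W)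
    (γ : f.fiber σ) : g.fiber σ := by
  refine ⟨α.toFun '' γ.1, α.map_faces γ.2.1, ?_⟩
  rw [← Set.image_comp]
  have h : g.toFun ∘ α.toFun = f.toFun := congrArg Map.toFun hc
  rw [h]
  exact γ.2.2

/-- Sections of a bundle scenario. -/
def BSection {Γ : SComplex V} {K : SComplex W} (f : Map Γ K) : Type _ :=
  {s : Map K Γ // f.comp s = Map.id K}

/-- Evaluation of a section of a bundle scenario at a simplex of the base,
giving an element of the fiber. -/
def BSection.ev {Γ : SComplex V} {K : SComplex W} (f : Map Γ K) (σ : Set W)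
    (hσ : σ ∈ K.faces) (s : BSection f) : f.fiber σ := by
  refine ⟨s.1.toFun '' σ, s.1.map_faces hσ, ?_⟩
  rw [← Set.image_comp]
  have h : f.toFun ∘ s.1.toFun = fun x => x := congrArg Map.toFun s.2
  rw [h, Set.image_id']

/-- Noncontextuality of an empirical model on a bundle scenario: it is a
mixture of deterministic models coming from sections. -/
def BundleNC (R : Type t) [CommSemiring R] {Γ : SComplex V} {K : SComplex W}
    (f : Map Γ K) (p : EmpiricalModel R f) : Prop :=
  ∃ d : Dist R (BSection f), ∀ σ (hσ : σ ∈ K.faces),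
    p.dist σ hσ = Dist.map (BSection.ev f σ hσ) d

/-- Noncontextuality of an empirical model on a scenario `(K, O)`: it is a
mixture of deterministic models coming from global outcome assignments. -/
def ScenNC (R : Type t) [CommSemiring R] (K : SComplex V) (O : V → Type v)
    (e : ScenEmp R K O) : Prop :=
  ∃ d : Dist R (∀ x : V, O x), ∀ σ (hσ : σ ∈ K.faces),
    e.dist σ hσ = Dist.map (fun (g : ∀ x : V, O x) (x : σ) => g x.1) d

end SComplex

end Ctx
namespace Ctx

open CategoryTheory SComplex

/-! ### Simplicial sets: the nerve space of a simplicial complex -/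

/-- The commutative monoid of subsets of `V` under union (with unit `∅`). -/
def UM (V : Type u) : Type u := Set V

namespace UM

/-- View an element of the union monoid as a set. -/
def toSet {V : Type u} (a : UM V) : Set V := a

/-- View a set as an element of the union monoid. -/
def ofSet {V : Type u} (a : Set V) : UM V := a

end UM

instance {V : Type u} : Monoid (UM V) where
  mul a b := UM.ofSet (a.toSet ∪ b.toSet)
  one := UM.ofSet ∅
  mul_assoc a b c := Set.union_assoc _ _ _
  one_mul := Set.empty_union
  mul_one := Set.union_empty

@[simp] lemma UM.toSet_mul {V : Type u} (a b : UM V) :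
    (a * b).toSet = a.toSet ∪ b.toSet := rfl

@[simp] lemma UM.toSet_one {V : Type u} : (1 : UM V).toSet = (∅ : Set V) := rfl

/-- The nerve of the one-object category on the union monoid: the ambient
simplicial set whose `n`-simplices are `n`-tuples of subsets of `V` (recorded
as a composable sequence of arrows). -/
def B (V : Type u) : SSet.{u} := nerve (SingleObj (UM V))

/-- The total subset (the "union of the entries") of a simplex of `B V`:
the value of the corresponding functor on the morphism `0 ⟶ last`. -/
def totM {V : Type u} {Δ : SimplexCategoryᵒᵖ} (x : (B V).obj Δ) : UM V :=
  x.map (homOfLE (Fin.zero_le (Fin.last Δ.unop.len)))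

/-- The total subset of a simplex of `B V`, as a set. -/
def tot {V : Type u} {Δ : SimplexCategoryᵒᵖ} (x : (B V).obj Δ) : Set V :=
  (totM x).toSet

lemma tot_whisker_subset {V : Type u} {m n : ℕ} (g : Fin (m + 1) ⥤ Fin (n + 1))
    (x : ComposableArrows (SingleObj (UM V)) n) :
    UM.toSet ((x.whiskerLeft g).map (homOfLE (Fin.zero_le (Fin.last m))))
      ⊆ UM.toSet (x.map (homOfLE (Fin.zero_le (Fin.last n)))) := by
  intro a ha
  have comp_eq : homOfLE (Fin.zero_le (Fin.last n))
      = homOfLE (Fin.zero_le (g.obj 0)) ≫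
          (g.map (homOfLE (Fin.zero_le (Fin.last m))) ≫
            homOfLE (Fin.le_last (g.obj (Fin.last m)))) :=
    Subsingleton.elim _ _
  have e : x.map (homOfLE (Fin.zero_le (Fin.last n)))
      = x.map (homOfLE (Fin.zero_le (g.obj 0))) ≫
          (x.map (g.map (homOfLE (Fin.zero_le (Fin.last m)))) ≫
            x.map (homOfLE (Fin.le_last (g.obj (Fin.last m))))) := by
    rw [comp_eq, x.map_comp, x.map_comp]
  have ha' : a ∈ UM.toSet (x.map (g.map (homOfLE (Fin.zero_le (Fin.last m))))) := ha
  rw [e, SingleObj.comp_as_mul, SingleObj.comp_as_mul, UM.toSet_mul, UM.toSet_mul]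
  exact Or.inl (Or.inr ha')

lemma tot_map_subset {V : Type u} {Δ Δ' : SimplexCategoryᵒᵖ} (θ : Δ ⟶ Δ')
    (x : (B V).obj Δ) : tot ((B V).map θ x) ⊆ tot x :=
  tot_whisker_subset (SimplexCategory.toCat.map θ.unop).toFunctor x

/-- The nerve space `N K` of a simplicial complex `K`: the simplicial subset
of `B V` consisting of the tuples of subsets whose union is empty or a
simplex of `K`.  (Each entry is then automatically empty or a simplex.) -/
def NC {V : Type u} (K : SComplex V) : SSet.{u} where
  obj Δ := {x : (B V).obj Δ // tot x = ∅ ∨ tot x ∈ K.faces}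
  map θ := ↾fun x => ⟨(B V).map θ x.1, by
    rcases x.2 with h | h
    · left
      have hsub := tot_map_subset θ x.1
      rw [h] at hsub
      exact Set.subset_empty_iff.mp hsub
    · by_cases h0 : tot ((B V).map θ x.1) = ∅
      · exact Or.inl h0
      · exact Or.inr (K.down_closed h (tot_map_subset θ x.1)
          (Set.nonempty_iff_ne_empty.mpr h0))⟩
  map_id Δ := by
    refine ConcreteCategory.hom_ext _ _ fun x => ?_
    exact Subtype.ext (congrArg (fun g => (ConcreteCategory.hom g) x.1) ((B V).map_id Δ))
  map_comp θ θ' := by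
    refine ConcreteCategory.hom_ext _ _ fun x => ?_
    exact Subtype.ext (congrArg (fun g => (ConcreteCategory.hom g) x.1) ((B V).map_comp θ θ'))

/-- The map of ambient simplicial sets induced by a monoid homomorphism of
union monoids. -/
def inducedB {V W : Type u} (h : UM V →* UM W) : B V ⟶ B W where
  app Δ := ↾fun x => x ⋙ (SingleObj.mapHom (UM V) (UM W)) h
  naturality Δ Δ' θ := rfl

lemma totM_inducedB {V W : Type u} (h : UM V →* UM W) {Δ : SimplexCategoryᵒᵖ}
    (x : (B V).obj Δ) : totM ((inducedB h).app Δ x) = h (totM x) := rfl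

/-- The map of nerve spaces induced by a monoid homomorphism of union monoids
carrying faces to faces. -/
def inducedNC {V W : Type u} {Γ : SComplex V} {K : SComplex W} (h : UM V →* UM W)
    (hh : ∀ σ : Set V, σ ∈ Γ.faces → (h (UM.ofSet σ)).toSet ∈ K.faces) :
    NC Γ ⟶ NC K where
  app Δ := ↾fun x => ⟨(inducedB h).app Δ x.1, by
    rcases x.2 with h0 | hfc
    · left
      have h1 : totM x.1 = 1 := h0
      show (totM ((inducedB h).app Δ x.1)).toSet = ∅
      rw [totM_inducedB, h1, map_one]
      rfl
    · right
      exact hh (tot x.1) hfc⟩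
  naturality Δ Δ' θ := by
    refine ConcreteCategory.hom_ext _ _ fun x => ?_
    exact Subtype.ext (congrArg (fun g => (ConcreteCategory.hom g) x.1) ((inducedB h).naturality θ))

/-- The image monoid homomorphism of union monoids induced by a function. -/
def imageHom {V W : Type u} (f : V → W) : UM V →* UM W where
  toFun a := UM.ofSet (f '' a.toSet)
  map_one' := congrArg UM.ofSet (Set.image_empty f)
  map_mul' a b := congrArg UM.ofSet (Set.image_union f a.toSet b.toSet)

/-- The map of nerve spaces `N f : N Γ → N K` induced by a simplicial complex
map `f : Γ → K`, applying `f` termwise (with `f(∅) = ∅`). -/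
def NMap {V W : Type u} {Γ : SComplex V} {K : SComplex W} (f : Map Γ K) :
    NC Γ ⟶ NC K :=
  inducedNC (imageHom f.toFun) (fun _ hσ => f.map_faces hσ)

/-- The union monoid homomorphism induced by a simplicial relation
`π : K' → ĤN K`. -/
def relHom {V' W : Type u} {K' : SComplex V'} {K : SComplex W}
    (π : Map K' (nerveC K)) : UM V' →* UM W where
  toFun a := UM.ofSet (⋃ x ∈ a.toSet, ((π.toFun x : K.Face) : Set W))
  map_one' := congrArg UM.ofSet (by simp [UM.toSet, UM.ofSet])
  map_mul' a b := congrArg UM.ofSet (Set.biUnion_union a.toSet b.toSet _)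

/-- The map of nerve spaces `T(π) : N K' → N K` induced by a simplicial
relation `π : K' → ĤN K`, applying `σ ↦ π̄(σ)` termwise. -/
def Tmap {V' W : Type u} {K' : SComplex V'} {K : SComplex W}
    (π : Map K' (nerveC K)) : NC K' ⟶ NC K :=
  inducedNC (relHom π) (fun σ hσ => by
    have h2 := (π.map_faces hσ).2.2
    rwa [Set.biUnion_image] at h2)

/-! ### Distributions on simplicial sets -/

/-- The distribution functor on the category of types. -/
noncomputable def DistF (R : Type u) [CommSemiring R] : Type u ⥤ Type u where
  obj U := Dist R U
  map g := ↾fun p => Dist.map g p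
  map_id U := by
    refine ConcreteCategory.hom_ext _ _ fun p => ?_
    exact Subtype.ext Finsupp.mapDomain_id
  map_comp g g' := by
    refine ConcreteCategory.hom_ext _ _ fun p => ?_
    exact Subtype.ext (Finsupp.mapDomain_comp (v := p.1) (f := ⇑g) (g := ⇑g'))

/-- The Dirac natural transformation `δ_X : X → D_R X`. -/
noncomputable def diracN (R : Type u) [CommSemiring R] (X : SSet.{u}) :
    X ⟶ X ⋙ DistF R where
  app Δ := ↾fun x => Dist.pure x
  naturality Δ Δ' θ := by
    refine ConcreteCategory.hom_ext _ _ fun x => ?_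
    exact Subtype.ext (Finsupp.mapDomain_single).symm

/-- A simplicial distribution on a simplicial set map `f : E → X`:
a simplicial set map `p : X → D_R E` with `D_R f ∘ p = δ_X`. -/
noncomputable def SDist (R : Type u) [CommSemiring R] {E X : SSet.{u}} (f : E ⟶ X) :
    Type u :=
  {p : X ⟶ E ⋙ DistF R // p ≫ Functor.whiskerRight f (DistF R) = diracN R X}

/-- Sections of a simplicial set map. -/
def SSetSection {E X : SSet.{u}} (f : E ⟶ X) : Type u := {s : X ⟶ E // s ≫ f = 𝟙 X}

/-- Noncontextuality of a simplicial distribution: it is a mixture of the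
deterministic distributions coming from sections, i.e. it is in the image of
`Θ : D_R(sections of f) → sDist(f)`. -/
noncomputable def SSetNC (R : Type u) [CommSemiring R] {E X : SSet.{u}} (f : E ⟶ X)
    (q : SDist R f) : Prop :=
  ∃ d : Dist R (SSetSection f), ∀ (Δ : SimplexCategoryᵒᵖ) (x : X.obj Δ),
    q.1.app Δ x = Dist.map (fun s : SSetSection f => s.1.app Δ x) d

/-- The defining property of the simplicial distribution `N p` on `N f`
associated to an empirical model `p` on a bundle scenario `f`:
its value on an `n`-simplex `(σ₁,…,σₙ)` of `N K` at `(γ₁,…,γₙ)` is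
`p_{σ₁∪⋯∪σₙ}(γ₁∪⋯∪γₙ)` when `(N f)(γ⃗) = σ⃗` and the union is nonempty,
is `0` when `(N f)(γ⃗) ≠ σ⃗`, and is the Dirac distribution at the tuple of
empty sets when all the `σᵢ` are empty. -/
def NpSpec {V W : Type u} {Γ : SComplex V} {K : SComplex W} (f : Map Γ K)
    (R : Type u) [CommSemiring R] (p : EmpiricalModel R f)
    (q : NC K ⟶ NC Γ ⋙ DistF R) : Prop :=
  (∀ (Δ : SimplexCategoryᵒᵖ) (x : (NC K).obj Δ) (y : (NC Γ).obj Δ),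
      (NMap f).app Δ y = x →
      ∀ (hu : tot x.1 ∈ K.faces) (γ : f.fiber (tot x.1)),
        (γ : Set V) = tot y.1 → (q.app Δ x).1 y = (p.dist _ hu).1 γ) ∧
  (∀ (Δ : SimplexCategoryᵒᵖ) (x : (NC K).obj Δ) (y : (NC Γ).obj Δ),
      (NMap f).app Δ y ≠ x → (q.app Δ x).1 y = 0) ∧
  (∀ (Δ : SimplexCategoryᵒᵖ) (x : (NC K).obj Δ), tot x.1 = ∅ →
      ∀ y : (NC Γ).obj Δ, tot y.1 = ∅ → q.app Δ x = Dist.pure y)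

/-- The `i`-th edge of an `n`-simplex of a nerve space. -/
def edgeN {V : Type u} {K : SComplex V} {n : ℕ} (i : Fin n)
    (x : (NC K).obj (Opposite.op (SimplexCategory.mk n))) :
    (NC K).obj (Opposite.op (SimplexCategory.mk 1)) :=
  (NC K).map (SimplexCategory.mkOfSucc i).op x

end Ctx

namespace Ctx
open CategoryTheory SComplex

/-!
Discreteness over vertices forces a simplex of `N Γ` over `x = (σ₁, …, σₙ)` to be the termwise
lift `(γ ∩ f⁻¹σ₁, …, γ ∩ f⁻¹σₙ)` of its own total simplex `γ`, which lies in the fiber over the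
total simplex `σ₁ ∪ ⋯ ∪ σₙ` of `x`; so `N p` at `x` is the push-forward of `p_{σ₁ ∪ ⋯ ∪ σₙ}` along
this lift. Conversely, zero-sum-freeness keeps all the mass of a simplicial distribution `q` at `x`
on simplices over `x`, i.e. on such lifts, and naturality along the diagonal `[1] → [n]` identifies
the resulting distribution on the fiber with the one `q` puts on the edge `(σ₁ ∪ ⋯ ∪ σₙ)`. These
edge distributions are compatible (via the face `d₂` of the triangle `(σ', σ)`), and the two
constructions are mutually inverse.
-/

section Nerve

variable {V : Type u}

lemma UM.ext {a b : UM V} (h : a.toSet = b.toSet) : a = b := h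

@[simp] lemma UM.toSet_ofSet (a : Set V) : (UM.ofSet a).toSet = a := rfl

def UM.interPreimageHom {W : Type u} (f : V → W) (γ : Set V) : UM W →* UM V where
  toFun a := UM.ofSet {v ∈ γ | f v ∈ UM.toSet a}
  map_one' := UM.ext (Set.ext fun _ => by simp)
  map_mul' a b := UM.ext (Set.ext fun _ => by simp [and_or_left])

lemma B.ext {Δ : SimplexCategoryᵒᵖ} {x y : (B V).obj Δ}
    (h : ∀ (i j : Fin (Δ.unop.len + 1)) (g : i ⟶ j), (x.map g).toSet = (y.map g).toSet) :
    x = y :=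
  CategoryTheory.Functor.ext (fun _ => rfl) (fun i j g => by simpa using UM.ext (h i j g))

lemma entry_subset_tot {Δ : SimplexCategoryᵒᵖ} (x : (B V).obj Δ)
    {i j : Fin (Δ.unop.len + 1)} (g : i ⟶ j) : (x.map g).toSet ⊆ tot x := by
  have e : x.map (homOfLE (Fin.zero_le (Fin.last Δ.unop.len)))
      = x.map (homOfLE (Fin.zero_le i)) ≫ x.map g ≫ x.map (homOfLE (Fin.le_last j)) := by
    rw [← x.map_comp, ← x.map_comp]; rfl
  intro a ha
  change a ∈ (x.map (homOfLE (Fin.zero_le (Fin.last Δ.unop.len)))).toSet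
  rw [e, SingleObj.comp_as_mul, SingleObj.comp_as_mul, UM.toSet_mul, UM.toSet_mul]
  exact Or.inl (Or.inr ha)

lemma B.eq_of_tot_eq_empty {Δ : SimplexCategoryᵒᵖ} {x y : (B V).obj Δ}
    (hx : tot x = ∅) (hy : tot y = ∅) : x = y :=
  B.ext fun _ _ g => by
    have hxg := entry_subset_tot x g
    have hyg := entry_subset_tot y g
    rw [hx, Set.subset_empty_iff] at hxg
    rw [hy, Set.subset_empty_iff] at hyg
    rw [hxg, hyg]

def B.mk₁ (a : UM V) : (B V).obj (Opposite.op (SimplexCategory.mk 1)) :=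
  ComposableArrows.mk₁ (X₀ := SingleObj.star (UM V)) (X₁ := SingleObj.star (UM V)) a

def B.mk₂ (a b : UM V) : (B V).obj (Opposite.op (SimplexCategory.mk 2)) :=
  ComposableArrows.mk₂ (X₀ := SingleObj.star (UM V)) (X₁ := SingleObj.star (UM V))
    (X₂ := SingleObj.star (UM V)) a b

lemma B.map_diag {Δ : SimplexCategoryᵒᵖ} (x : (B V).obj Δ) :
    (B V).map (SimplexCategory.diag Δ.unop.len).op x = B.mk₁ (totM x) := by
  refine ComposableArrows.ext₁ rfl rfl ?_
  simp only [B.mk₁, totM, homOfLE_leOfHom, ComposableArrows.mk₁_map, ComposableArrows.Mk₁.map,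
    eqToHom_refl, Category.comp_id, Category.id_comp]
  rfl

end Nerve

section Lift

variable {V W : Type u} {Γ : SComplex V} {K : SComplex W} (f : Map Γ K)

def liftNC {Δ : SimplexCategoryᵒᵖ} (x : (NC K).obj Δ) (γ : Set V)
    (hγ : γ = ∅ ∨ γ ∈ Γ.faces) : (NC Γ).obj Δ :=
  ⟨(inducedB (UM.interPreimageHom f.toFun γ)).app Δ x.1, by
    by_cases h : {v ∈ γ | f.toFun v ∈ tot x.1} = ∅
    · exact Or.inl h
    · obtain ⟨v, hv, -⟩ := Set.nonempty_iff_ne_empty.mpr h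
      have hγ' := hγ.resolve_left (Set.nonempty_iff_ne_empty.mp ⟨v, hv⟩)
      exact Or.inr (Γ.down_closed hγ' (fun _ h => h.1) (Set.nonempty_iff_ne_empty.mpr h))⟩

variable {f}

lemma liftNC_map {Δ : SimplexCategoryᵒᵖ} (x : (NC K).obj Δ) {γ : Set V}
    (hγ : γ = ∅ ∨ γ ∈ Γ.faces) {i j : Fin (Δ.unop.len + 1)} (g : i ⟶ j) :
    ((liftNC f x γ hγ).1.map g).toSet = {v ∈ γ | f.toFun v ∈ (x.1.map g).toSet} := rfl

lemma tot_liftNC {Δ : SimplexCategoryᵒᵖ} (x : (NC K).obj Δ) {γ : Set V}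
    (hγ : γ = ∅ ∨ γ ∈ Γ.faces) : tot (liftNC f x γ hγ).1 = {v ∈ γ | f.toFun v ∈ tot x.1} :=
  rfl

lemma map_liftNC {Δ Δ' : SimplexCategoryᵒᵖ} (θ : Δ ⟶ Δ') (x : (NC K).obj Δ) {γ : Set V}
    (hγ : γ = ∅ ∨ γ ∈ Γ.faces) :
    (NC Γ).map θ (liftNC f x γ hγ) = liftNC f ((NC K).map θ x) γ hγ :=
  rfl

lemma liftNC_congr {Δ : SimplexCategoryᵒᵖ} (x : (NC K).obj Δ) {γ γ' : Set V}
    (hγ : γ = ∅ ∨ γ ∈ Γ.faces) (hγ' : γ' = ∅ ∨ γ' ∈ Γ.faces)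
    (h : {v ∈ γ | f.toFun v ∈ tot x.1} = {v ∈ γ' | f.toFun v ∈ tot x.1}) :
    liftNC f x γ hγ = liftNC f x γ' hγ' := by
  refine Subtype.ext (B.ext fun i j g => ?_)
  rw [liftNC_map, liftNC_map]
  ext v
  refine and_congr_left fun hv => ?_
  simpa [entry_subset_tot x.1 g hv] using Set.ext_iff.mp h v

lemma NMap_liftNC {Δ : SimplexCategoryᵒᵖ} (x : (NC K).obj Δ) {γ : Set V}
    (hγ : γ = ∅ ∨ γ ∈ Γ.faces) (hcov : tot x.1 ⊆ f.toFun '' γ) :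
    (NMap f).app Δ (liftNC f x γ hγ) = x := by
  refine Subtype.ext (B.ext fun i j g => ?_)
  change f.toFun '' {v ∈ γ | f.toFun v ∈ (x.1.map g).toSet} = _
  ext w
  refine ⟨fun ⟨v, hv, hvw⟩ => hvw ▸ hv.2, fun hw => ?_⟩
  obtain ⟨v, hv, rfl⟩ := hcov (entry_subset_tot x.1 g hw)
  exact ⟨v, ⟨hv, hw⟩, rfl⟩

lemma eq_liftNC_of_NMap_eq (hd : f.DiscV) {Δ : SimplexCategoryᵒᵖ} {x : (NC K).obj Δ}
    {y : (NC Γ).obj Δ} (he : (NMap f).app Δ y = x) : y = liftNC f x (tot y.1) y.2 := by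
  subst he
  refine Subtype.ext (B.ext fun i j g => ?_)
  change _ = {v ∈ tot y.1 | f.toFun v ∈ f.toFun '' (y.1.map g).toSet}
  ext v
  refine ⟨fun hv => ⟨entry_subset_tot y.1 g hv, v, hv, rfl⟩, fun ⟨hv, w, hw, hwv⟩ => ?_⟩
  by_contra hne
  have hy : tot y.1 ∈ Γ.faces := y.2.resolve_left (Set.nonempty_iff_ne_empty.mp ⟨v, hv⟩)
  refine hd w v (fun h => hne (h ▸ hw)) hwv (Γ.down_closed hy ?_ ⟨w, Or.inl rfl⟩)
  rintro z (rfl | rfl)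
  exacts [entry_subset_tot y.1 g hw, hv]

end Lift

section Distributions

variable {R : Type*} [CommSemiring R] {U U' U'' : Type*}

lemma Dist.map_map (g : U' → U'') (h : U → U') (p : Dist R U) :
    Dist.map g (Dist.map h p) = Dist.map (g ∘ h) p :=
  Subtype.ext Finsupp.mapDomain_comp.symm

lemma Dist.map_congr {g g' : U → U'} (p : Dist R U) (h : ∀ a ∈ p.1.support, g a = g' a) :
    Dist.map g p = Dist.map g' p :=
  Subtype.ext (Finsupp.mapDomain_congr h)

lemma Dist.map_id_of_support {g : U → U} (p : Dist R U) (h : ∀ a ∈ p.1.support, g a = a) :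
    Dist.map g p = p :=
  Subtype.ext ((Finsupp.mapDomain_congr h).trans Finsupp.mapDomain_id)

lemma Dist.map_pure (g : U → U') (a : U) : Dist.map g (Dist.pure a : Dist R U) = Dist.pure (g a) :=
  Subtype.ext Finsupp.mapDomain_single

lemma Dist.map_const (c : U') (p : Dist R U) : Dist.map (fun _ => c) p = Dist.pure c := by
  refine Subtype.ext ?_
  change Finsupp.mapDomain _ p.1 = Finsupp.single c 1
  rw [Finsupp.mapDomain, Finsupp.sum, ← Finsupp.single_finsetSum]
  exact congrArg _ p.2

lemma Dist.eq_pure_of_support (p : Dist R U) {a₀ : U} (h : ∀ a ∈ p.1.support, a = a₀) :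
    p = Dist.pure a₀ :=
  (Dist.map_id_of_support p fun a ha => (h a ha).symm).symm.trans (Dist.map_const a₀ p)

/-- Over a zero-sum-free semiring, no mass can cancel under push-forward. -/
lemma Dist.eq_of_mem_support_of_map_eq_pure (hR : ∀ a b : R, a + b = 0 → a = 0 ∧ b = 0)
    {g : U → U'} {p : Dist R U} {c : U'} (h : Dist.map g p = Dist.pure c) {a : U}
    (ha : a ∈ p.1.support) : g a = c := by
  classical
  by_contra hne
  have hsum : ∑ b ∈ p.1.support, Finsupp.single (g b) (p.1 b) (g a) = 0 := by
    rw [← Finsupp.finsetSum_apply, ← Finsupp.sum, ← Finsupp.mapDomain]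
    change (Dist.map g p).1 (g a) = 0
    rw [h]
    exact Finsupp.single_eq_of_ne hne
  rw [← Finset.add_sum_erase _ _ ha, Finsupp.single_eq_same] at hsum
  exact Finsupp.mem_support_iff.mp ha (hR _ _ hsum).1

end Distributions

section NerveDist

variable {V W : Type u} {Γ : SComplex V} {K : SComplex W} {f : Map Γ K}

lemma tot_eq_empty_of_notMem_faces {Δ : SimplexCategoryᵒᵖ} {x : (NC K).obj Δ}
    (h : tot x.1 ∉ K.faces) : tot x.1 = ∅ :=
  x.2.resolve_right h

lemma tot_notMem_faces_of_eq_empty {Δ : SimplexCategoryᵒᵖ} {x : (NC K).obj Δ}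
    (h : tot x.1 = ∅) : tot x.1 ∉ K.faces :=
  fun hx => (K.nonempty_mem _ hx).ne_empty h

variable (f) in
def liftFiber {Δ : SimplexCategoryᵒᵖ} (x : (NC K).obj Δ) (γ : f.fiber (tot x.1)) :
    (NC Γ).obj Δ :=
  liftNC f x γ.1 (Or.inr γ.2.1)

variable (f) in
def liftEmpty {Δ : SimplexCategoryᵒᵖ} (x : (NC K).obj Δ) : (NC Γ).obj Δ :=
  liftNC f x ∅ (Or.inl rfl)

lemma tot_liftFiber {Δ : SimplexCategoryᵒᵖ} (x : (NC K).obj Δ) (γ : f.fiber (tot x.1)) :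
    tot (liftFiber f x γ).1 = γ.1 :=
  Set.sep_eq_self_iff_mem_true.mpr fun v hv =>
    (γ.2.2 ▸ Set.mem_image_of_mem f.toFun hv : f.toFun v ∈ tot x.1)

lemma tot_liftEmpty {Δ : SimplexCategoryᵒᵖ} (x : (NC K).obj Δ) : tot (liftEmpty f x).1 = ∅ :=
  Set.ext fun _ => by simp [liftEmpty, tot_liftNC]

lemma liftFiber_injective {Δ : SimplexCategoryᵒᵖ} (x : (NC K).obj Δ) :
    Function.Injective (liftFiber f x) := fun γ γ' h =>
  Subtype.ext ((tot_liftFiber x γ).symm.trans ((congrArg (fun y => tot y.1) h).trans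
    (tot_liftFiber x γ')))

lemma NMap_liftFiber {Δ : SimplexCategoryᵒᵖ} (x : (NC K).obj Δ) (γ : f.fiber (tot x.1)) :
    (NMap f).app Δ (liftFiber f x γ) = x :=
  NMap_liftNC x _ γ.2.2.ge

lemma NMap_liftEmpty {Δ : SimplexCategoryᵒᵖ} {x : (NC K).obj Δ} (hx : tot x.1 = ∅) :
    (NMap f).app Δ (liftEmpty f x) = x :=
  NMap_liftNC x _ ((Set.subset_empty_iff.mpr hx).trans (Set.empty_subset _))

lemma liftFiber_eq_of_NMap_eq (hd : f.DiscV) {Δ : SimplexCategoryᵒᵖ} {x : (NC K).obj Δ}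
    {y : (NC Γ).obj Δ} (he : (NMap f).app Δ y = x) (γ : f.fiber (tot x.1))
    (hγ : γ.1 = tot y.1) : liftFiber f x γ = y :=
  (liftNC_congr x _ _ (by rw [hγ])).trans (eq_liftNC_of_NMap_eq hd he).symm

lemma map_liftFiber {Δ Δ' : SimplexCategoryᵒᵖ} (θ : Δ ⟶ Δ') (x : (NC K).obj Δ)
    (γ : f.fiber (tot x.1)) (h : tot ((NC K).map θ x).1 ∈ K.faces) :
    (NC Γ).map θ (liftFiber f x γ)
      = liftFiber f ((NC K).map θ x) (f.resFiber h (tot_map_subset θ x.1) γ) :=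
  (map_liftNC θ x _).trans
    (liftNC_congr _ _ _ (Set.ext fun _ => (and_iff_left_of_imp fun h => h.2).symm))

lemma map_liftFiber_of_tot_eq_empty {Δ Δ' : SimplexCategoryᵒᵖ} (θ : Δ ⟶ Δ')
    (x : (NC K).obj Δ) (γ : f.fiber (tot x.1)) (h : tot ((NC K).map θ x).1 = ∅) :
    (NC Γ).map θ (liftFiber f x γ) = liftEmpty f ((NC K).map θ x) :=
  (map_liftNC θ x _).trans (liftNC_congr _ _ _ (by rw [h]; simp))

lemma map_liftEmpty {Δ Δ' : SimplexCategoryᵒᵖ} (θ : Δ ⟶ Δ') (x : (NC K).obj Δ) :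
    (NC Γ).map θ (liftEmpty f x) = liftEmpty f ((NC K).map θ x) :=
  rfl

variable {R : Type u} [CommSemiring R]

open scoped Classical in
noncomputable def nerveDistApp (p : EmpiricalModel R f) {Δ : SimplexCategoryᵒᵖ}
    (x : (NC K).obj Δ) : Dist R ((NC Γ).obj Δ) :=
  if h : tot x.1 ∈ K.faces then Dist.map (liftFiber f x) (p.dist _ h)
  else Dist.pure (liftEmpty f x)

lemma nerveDistApp_of_mem_faces (p : EmpiricalModel R f) {Δ : SimplexCategoryᵒᵖ}
    (x : (NC K).obj Δ) (h : tot x.1 ∈ K.faces) :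
    nerveDistApp p x = Dist.map (liftFiber f x) (p.dist _ h) :=
  dif_pos h

lemma nerveDistApp_of_notMem_faces (p : EmpiricalModel R f) {Δ : SimplexCategoryᵒᵖ}
    (x : (NC K).obj Δ) (h : tot x.1 ∉ K.faces) :
    nerveDistApp p x = Dist.pure (liftEmpty f x) :=
  dif_neg h

lemma nerveDistApp_map (p : EmpiricalModel R f) {Δ Δ' : SimplexCategoryᵒᵖ} (θ : Δ ⟶ Δ')
    (x : (NC K).obj Δ) :
    nerveDistApp p ((NC K).map θ x) = Dist.map ((NC Γ).map θ) (nerveDistApp p x) := by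
  by_cases hx : tot x.1 ∈ K.faces
  · rw [nerveDistApp_of_mem_faces p x hx, Dist.map_map]
    by_cases hθx : tot ((NC K).map θ x).1 ∈ K.faces
    · rw [nerveDistApp_of_mem_faces p _ hθx, ← p.compat _ hx _ hθx (tot_map_subset θ x.1),
        Dist.map_map]
      exact Dist.map_congr _ fun γ _ => (map_liftFiber θ x γ hθx).symm
    · have hθx₀ := tot_eq_empty_of_notMem_faces hθx
      rw [nerveDistApp_of_notMem_faces p _ hθx, ← Dist.map_const _ (p.dist _ hx)]
      exact Dist.map_congr _ fun γ _ => (map_liftFiber_of_tot_eq_empty θ x γ hθx₀).symm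
  · have hsub := tot_map_subset θ x.1
    rw [tot_eq_empty_of_notMem_faces hx, Set.subset_empty_iff] at hsub
    have hθx : tot ((NC K).map θ x).1 ∉ K.faces := tot_notMem_faces_of_eq_empty hsub
    rw [nerveDistApp_of_notMem_faces p x hx, nerveDistApp_of_notMem_faces p _ hθx, Dist.map_pure,
      map_liftEmpty]

lemma map_NMap_nerveDistApp (p : EmpiricalModel R f) {Δ : SimplexCategoryᵒᵖ}
    (x : (NC K).obj Δ) : Dist.map ((NMap f).app Δ) (nerveDistApp p x) = Dist.pure x := by
  by_cases hx : tot x.1 ∈ K.faces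
  · rw [nerveDistApp_of_mem_faces p x hx, Dist.map_map, ← Dist.map_const x (p.dist _ hx)]
    exact Dist.map_congr _ fun γ _ => NMap_liftFiber x γ
  · rw [nerveDistApp_of_notMem_faces p x hx, Dist.map_pure,
      NMap_liftEmpty (tot_eq_empty_of_notMem_faces hx)]

variable (R) in
/-- The simplicial distribution `N p`. -/
noncomputable def SComplex.EmpiricalModel.nerveDist (p : EmpiricalModel R f) : SDist R (NMap f) :=
  ⟨{ app _ := ↾fun x => nerveDistApp p x
     naturality _ _ θ := ConcreteCategory.hom_ext _ _ fun x => nerveDistApp_map p θ x },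
   NatTrans.ext (funext fun _ => ConcreteCategory.hom_ext _ _ fun x =>
     map_NMap_nerveDistApp p x)⟩

lemma SComplex.EmpiricalModel.nerveDist_app (p : EmpiricalModel R f) {Δ : SimplexCategoryᵒᵖ}
    (x : (NC K).obj Δ) : (p.nerveDist R).1.app Δ x = nerveDistApp p x :=
  rfl

lemma SComplex.EmpiricalModel.nerveDist_spec (hd : f.DiscV) (p : EmpiricalModel R f) :
    NpSpec f R p (p.nerveDist R).1 := by
  refine ⟨fun Δ x y he hx γ hγ => ?_, fun Δ x y hne => ?_, fun Δ x hx y hy => ?_⟩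
  · rw [nerveDist_app, nerveDistApp_of_mem_faces p x hx, ← liftFiber_eq_of_NMap_eq hd he γ hγ]
    exact Finsupp.mapDomain_apply (liftFiber_injective x) _ γ
  · by_cases hx : tot x.1 ∈ K.faces
    · rw [nerveDist_app, nerveDistApp_of_mem_faces p x hx]
      refine Finsupp.mapDomain_of_notMem_range _ _ ?_
      rintro ⟨γ, rfl⟩
      exact hne (NMap_liftFiber x γ)
    · rw [nerveDist_app, nerveDistApp_of_notMem_faces p x hx]
      refine Finsupp.single_eq_of_ne ?_
      rintro rfl
      exact hne (NMap_liftEmpty (tot_eq_empty_of_notMem_faces hx))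
  · rw [nerveDist_app, nerveDistApp_of_notMem_faces p x (tot_notMem_faces_of_eq_empty hx)]
    exact congrArg Dist.pure (Subtype.ext (B.eq_of_tot_eq_empty (tot_liftEmpty x) hy))

end NerveDist

section Inverse

variable {V W : Type u} {Γ : SComplex V} {K : SComplex W} {f : Map Γ K}

open scoped Classical in
/-- `y` read as a simplex of the fiber over `σ` through its total simplex; surjectivity of `f`
supplies a junk value when `tot y` does not lie in that fiber. -/
noncomputable def SComplex.Map.fiberOf (hs : f.Surj) {σ : Set W} (hσ : σ ∈ K.faces)
    {Δ : SimplexCategoryᵒᵖ} (y : (NC Γ).obj Δ) : f.fiber σ :=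
  if h : tot y.1 ∈ Γ.faces ∧ f.toFun '' tot y.1 = σ then ⟨tot y.1, h⟩
  else ⟨(hs σ hσ).choose, (hs σ hσ).choose_spec⟩

lemma SComplex.Map.fiberOf_eq (hs : f.Surj) {σ : Set W} (hσ : σ ∈ K.faces)
    {Δ : SimplexCategoryᵒᵖ} {y : (NC Γ).obj Δ} {γ : f.fiber σ} (h : tot y.1 = γ.1) :
    f.fiberOf hs hσ y = γ := by
  rw [SComplex.Map.fiberOf, dif_pos (h ▸ γ.2)]
  exact Subtype.ext h

lemma SComplex.Map.fiberOf_congr (hs : f.Surj) {σ : Set W} (hσ : σ ∈ K.faces)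
    {Δ Δ' : SimplexCategoryᵒᵖ} {y : (NC Γ).obj Δ} {y' : (NC Γ).obj Δ'}
    (h : tot y.1 = tot y'.1) : f.fiberOf hs hσ y = f.fiberOf hs hσ y' := by
  unfold SComplex.Map.fiberOf
  rw [h]

variable (K) in
def oneSimplex (σ : Set W) (hσ : σ ∈ K.faces) : (NC K).obj (Opposite.op (SimplexCategory.mk 1)) :=
  ⟨B.mk₁ (UM.ofSet σ), Or.inr hσ⟩

variable (K) in
def twoSimplex {σ' σ : Set W} (hsub : σ' ⊆ σ) (hσ : σ ∈ K.faces) :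
    (NC K).obj (Opposite.op (SimplexCategory.mk 2)) :=
  ⟨B.mk₂ (UM.ofSet σ') (UM.ofSet σ),
    Or.inr (by change σ ∪ σ' ∈ K.faces; rwa [Set.union_eq_left.mpr hsub])⟩

lemma tot_twoSimplex {σ' σ : Set W} (hsub : σ' ⊆ σ) (hσ : σ ∈ K.faces) :
    tot (twoSimplex K hsub hσ).1 = σ :=
  Set.union_eq_left.mpr hsub

lemma map_diag_eq_oneSimplex {Δ : SimplexCategoryᵒᵖ} (x : (NC K).obj Δ) (hx : tot x.1 ∈ K.faces) :
    (NC K).map (SimplexCategory.diag Δ.unop.len).op x = oneSimplex K (tot x.1) hx :=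
  Subtype.ext (B.map_diag x.1)

lemma map_δ₂_twoSimplex {σ' σ : Set W} (hsub : σ' ⊆ σ) (hσ : σ ∈ K.faces)
    (hσ' : σ' ∈ K.faces) :
    (NC K).map (SimplexCategory.δ 2).op (twoSimplex K hsub hσ) = oneSimplex K σ' hσ' :=
  Subtype.ext (nerve.δ₂_mk₂_eq _ _)

variable {R : Type u} [CommSemiring R]

lemma distNat_app_map {X Y : SSet.{u}} (q : X ⟶ Y ⋙ DistF R) {Δ Δ' : SimplexCategoryᵒᵖ}
    (θ : Δ ⟶ Δ') (x : X.obj Δ) : q.app Δ' (X.map θ x) = Dist.map (Y.map θ) (q.app Δ x) :=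
  ConcreteCategory.congr_hom (q.naturality θ) x

variable {q : SDist R (NMap f)}

lemma NMap_eq_of_mem_support (hR : ∀ a b : R, a + b = 0 → a = 0 ∧ b = 0)
    {Δ : SimplexCategoryᵒᵖ} {x : (NC K).obj Δ} {y : (NC Γ).obj Δ}
    (hy : y ∈ (q.1.app Δ x).1.support) : (NMap f).app Δ y = x :=
  Dist.eq_of_mem_support_of_map_eq_pure hR
    (ConcreteCategory.congr_hom (congrArg (fun α => NatTrans.app α Δ) q.2) x) hy

lemma image_tot_eq_of_mem_support (hR : ∀ a b : R, a + b = 0 → a = 0 ∧ b = 0)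
    {Δ : SimplexCategoryᵒᵖ} {x : (NC K).obj Δ} {y : (NC Γ).obj Δ}
    (hy : y ∈ (q.1.app Δ x).1.support) : f.toFun '' tot y.1 = tot x.1 := by
  rw [← NMap_eq_of_mem_support hR hy]
  rfl

lemma mem_fiber_of_mem_support (hR : ∀ a b : R, a + b = 0 → a = 0 ∧ b = 0)
    {Δ : SimplexCategoryᵒᵖ} {x : (NC K).obj Δ} (hx : tot x.1 ∈ K.faces) {y : (NC Γ).obj Δ}
    (hy : y ∈ (q.1.app Δ x).1.support) : tot y.1 ∈ Γ.faces ∧ f.toFun '' tot y.1 = tot x.1 := by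
  have him := image_tot_eq_of_mem_support hR hy
  refine ⟨y.2.resolve_left fun h => ?_, him⟩
  rw [h, Set.image_empty] at him
  exact tot_notMem_faces_of_eq_empty him.symm hx

variable (q) in
noncomputable def edgeDist (hs : f.Surj) (σ : Set W) (hσ : σ ∈ K.faces) : Dist R (f.fiber σ) :=
  Dist.map (f.fiberOf hs hσ) (q.1.app _ (oneSimplex K σ hσ))

/-- Naturality along the diagonal `[1] → [n]` sees `q` at `x` through its total edge. -/
lemma map_fiberOf_app (hs : f.Surj) {Δ : SimplexCategoryᵒᵖ} (x : (NC K).obj Δ)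
    {σ : Set W} (hσ : σ ∈ K.faces) (hx : tot x.1 = σ) :
    Dist.map (f.fiberOf hs hσ) (q.1.app Δ x) = edgeDist q hs σ hσ := by
  subst hx
  rw [edgeDist, ← map_diag_eq_oneSimplex x hσ, distNat_app_map]
  refine Eq.trans ?_ (Dist.map_map _ _ _).symm
  refine Dist.map_congr _ fun y _ => f.fiberOf_congr hs hσ ?_
  change tot y.1 = tot ((B V).map _ y.1)
  rw [B.map_diag]
  rfl

lemma app_eq_map_liftFiber (hd : f.DiscV)
    (hR : ∀ a b : R, a + b = 0 → a = 0 ∧ b = 0) (hs : f.Surj) {Δ : SimplexCategoryᵒᵖ}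
    (x : (NC K).obj Δ) (hx : tot x.1 ∈ K.faces) :
    q.1.app Δ x = Dist.map (liftFiber f x) (edgeDist q hs _ hx) := by
  rw [← map_fiberOf_app hs x hx rfl]
  refine Eq.trans ?_ (Dist.map_map _ _ _).symm
  refine (Dist.map_id_of_support _ fun y hy => ?_).symm
  have hc := mem_fiber_of_mem_support hR hx hy
  rw [Function.comp_apply, f.fiberOf_eq hs hx (γ := ⟨_, hc⟩) rfl]
  exact liftFiber_eq_of_NMap_eq hd (NMap_eq_of_mem_support hR hy) _ rfl

lemma app_eq_pure_liftEmpty (hR : ∀ a b : R, a + b = 0 → a = 0 ∧ b = 0)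
    {Δ : SimplexCategoryᵒᵖ} (x : (NC K).obj Δ) (hx : tot x.1 = ∅) :
    q.1.app Δ x = Dist.pure (liftEmpty f x) := by
  refine Dist.eq_pure_of_support _ fun y hy =>
    Subtype.ext (B.eq_of_tot_eq_empty ?_ (tot_liftEmpty x))
  have him := image_tot_eq_of_mem_support hR hy
  rwa [hx, Set.image_eq_empty] at him

lemma edgeDist_compat (hd : f.DiscV)
    (hR : ∀ a b : R, a + b = 0 → a = 0 ∧ b = 0) (hs : f.Surj) {σ σ' : Set W}
    (hσ : σ ∈ K.faces) (hσ' : σ' ∈ K.faces) (hsub : σ' ⊆ σ) :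
    Dist.map (f.resFiber hσ' hsub) (edgeDist q hs σ hσ) = edgeDist q hs σ' hσ' := by
  have hx := tot_twoSimplex hsub hσ
  rw [← map_fiberOf_app hs _ hσ hx, edgeDist, ← map_δ₂_twoSimplex hsub hσ hσ', distNat_app_map]
  refine (Dist.map_map _ _ _).trans (Eq.trans ?_ (Dist.map_map _ _ _).symm)
  refine Dist.map_congr _ fun y hy => ?_
  have he := NMap_eq_of_mem_support hR hy
  have hc := mem_fiber_of_mem_support hR (by rw [hx]; exact hσ) hy
  rw [Function.comp_apply, Function.comp_apply,
    f.fiberOf_eq hs hσ (γ := ⟨_, hc.imp_right (·.trans hx)⟩) rfl]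
  refine (f.fiberOf_eq hs hσ' ?_).symm
  conv_lhs => rw [eq_liftNC_of_NMap_eq hd he, map_liftNC, tot_liftNC, map_δ₂_twoSimplex hsub hσ hσ']
  rfl

end Inverse

section Bijection

variable {V W : Type u} {Γ : SComplex V} {K : SComplex W} {f : Map Γ K}
variable {R : Type u} [CommSemiring R]

lemma SComplex.EmpiricalModel.ext {p p' : EmpiricalModel R f}
    (h : ∀ σ (hσ : σ ∈ K.faces), p.dist σ hσ = p'.dist σ hσ) : p = p' := by
  cases p
  cases p'
  congr
  funext σ hσ
  exact h σ hσ

noncomputable def SDist.toEmpiricalModel (hf : f.IsBundle)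
    (hR : ∀ a b : R, a + b = 0 → a = 0 ∧ b = 0) (q : SDist R (NMap f)) : EmpiricalModel R f where
  dist := edgeDist q hf.1
  compat _ hσ _ hσ' hsub := edgeDist_compat hf.2.2 hR hf.1 hσ hσ' hsub

lemma SDist.toEmpiricalModel_nerveDist (hf : f.IsBundle)
    (hR : ∀ a b : R, a + b = 0 → a = 0 ∧ b = 0) (p : EmpiricalModel R f) :
    (p.nerveDist R).toEmpiricalModel hf hR = p := by
  refine SComplex.EmpiricalModel.ext fun σ hσ => ?_
  change Dist.map _ (nerveDistApp p (oneSimplex K σ hσ)) = _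
  rw [nerveDistApp_of_mem_faces p (oneSimplex K σ hσ) hσ]
  refine (Dist.map_map _ _ _).trans (Dist.map_id_of_support _ fun γ _ => ?_)
  exact f.fiberOf_eq hf.1 hσ (tot_liftFiber _ γ)

lemma SComplex.EmpiricalModel.nerveDist_toEmpiricalModel (hf : f.IsBundle)
    (hR : ∀ a b : R, a + b = 0 → a = 0 ∧ b = 0) (q : SDist R (NMap f)) :
    (q.toEmpiricalModel hf hR).nerveDist R = q := by
  refine Subtype.ext (NatTrans.ext (funext fun Δ => ConcreteCategory.hom_ext _ _ fun x => ?_))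
  change nerveDistApp _ x = q.1.app Δ x
  by_cases hx : tot x.1 ∈ K.faces
  · rw [nerveDistApp_of_mem_faces _ x hx, app_eq_map_liftFiber hf.2.2 hR hf.1 x hx]
    rfl
  · rw [nerveDistApp_of_notMem_faces _ x hx,
      app_eq_pure_liftEmpty hR x (tot_eq_empty_of_notMem_faces hx)]

end Bijection

/-- the assignment `ζ_f : p ↦ N p` is a bijection from the set
of empirical models on a bundle scenario `f` onto the set of simplicial
distributions on `N f`. -/
theorem statement_16 {V W : Type u} {Γ : SComplex V} {K : SComplex W}
    (f : Map Γ K) (hf : f.IsBundle) (R : Type u) [CommSemiring R]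
    (hR : ∀ a b : R, a + b = 0 → a = 0 ∧ b = 0) :
    ∃ ζ : EmpiricalModel R f → SDist R (NMap f),
      (∀ p, NpSpec f R p (ζ p).1) ∧ Function.Bijective ζ :=
  ⟨fun p => p.nerveDist R, fun p => p.nerveDist_spec hf.2.2,
    Function.bijective_iff_has_inverse.mpr ⟨SDist.toEmpiricalModel hf hR,
      SDist.toEmpiricalModel_nerveDist hf hR,
      SComplex.EmpiricalModel.nerveDist_toEmpiricalModel hf hR⟩⟩

end Ctx
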